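/- Adaptation bound: let A and B be independent random variables on a finite set Ω, let S, S' be random variables with values in [0,1], and let f, g : Ω → [0,1]. Then E[|S − f(A)|] ≤ E[|S − g(A)|] + E[|g(B) − S'|] + E[|S' − f(B)|] + sqrt( ε(A,B) · ∑_{x∈Ω} |g(x) − f(x)|² ), where ε(A,B) is the discrete energy distance. -/

import Mathlib

/-!
With `h = |g - f|`, the triangle inequality gives `E|S - f(A)| ≤ E|S - g(A)| + E h(A)` and
`E h(B) ≤ E|g(B) - S'| + E|S' - f(B)|`. The remaining gap `E h(A) - E h(B)` equals
`∑ₓ (p_A x - p_B x) h x`, which Cauchy–Schwarz bounds by `√(∑ₓ (p_A x - p_B x)² · ∑ₓ h x²)`.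
Finally `P(X ≠ Y) = 1 - ∑ₓ p_X x p_Y x` for independent `X, Y`, so the energy distance is
exactly `∑ₓ (p_A x - p_B x)²`.
-/

open MeasureTheory ProbabilityTheory

section FiniteValued

variable {Ω₀ Ω : Type*} [MeasurableSpace Ω₀] [Fintype Ω] [MeasurableSpace Ω]
  [MeasurableSingletonClass Ω] {μ : Measure Ω₀}

lemma integral_comp_eq_sum_map [IsFiniteMeasure μ] {X : Ω₀ → Ω} (hX : Measurable X)
    (F : Ω → ℝ) : ∫ ω, F (X ω) ∂μ = ∑ x, (μ.map X).real {x} * F x := by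
  rw [← integral_map hX.aemeasurable (measurable_of_countable F).aestronglyMeasurable,
    integral_fintype .of_finite]
  rfl

lemma ProbabilityTheory.IndepFun.measureReal_ne_eq_one_sub_sum [IsProbabilityMeasure μ]
    {X Y : Ω₀ → Ω} (hX : Measurable X) (hY : Measurable Y) (hXY : IndepFun X Y μ) :
    μ.real {ω | X ω ≠ Y ω} = 1 - ∑ x, (μ.map X).real {x} * (μ.map Y).real {x} := by
  have hmeas : ∀ x, MeasurableSet (X ⁻¹' {x} ∩ Y ⁻¹' {x}) := fun x =>
    (hX (measurableSet_singleton x)).inter (hY (measurableSet_singleton x))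
  have hdisj : Pairwise (Function.onFun Disjoint fun x => X ⁻¹' {x} ∩ Y ⁻¹' {x}) :=
    fun a b hab => Set.disjoint_left.2 fun ω ha hb => hab (ha.1.symm.trans hb.1)
  have heq : {ω | X ω = Y ω} = ⋃ x, X ⁻¹' {x} ∩ Y ⁻¹' {x} := by
    ext ω
    simp [eq_comm]
  have hne : {ω | X ω ≠ Y ω} = {ω | X ω = Y ω}ᶜ := rfl
  rw [hne, probReal_compl_eq_one_sub (heq ▸ MeasurableSet.iUnion hmeas), heq,
    measureReal_iUnion_fintype hdisj hmeas]
  congr 1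
  refine Finset.sum_congr rfl fun x _ => ?_
  rw [map_measureReal_apply hX (measurableSet_singleton x),
    map_measureReal_apply hY (measurableSet_singleton x), measureReal_def, measureReal_def,
    measureReal_def, hXY.measure_inter_preimage_eq_mul _ _ (measurableSet_singleton x)
      (measurableSet_singleton x), ENNReal.toReal_mul]

lemma two_mul_measureReal_ne_sub_sub_eq_sum_sq [IsProbabilityMeasure μ] {A B A' B' : Ω₀ → Ω}
    (hA : Measurable A) (hB : Measurable B) (hA' : Measurable A') (hB' : Measurable B')
    (hAB : IndepFun A B μ) (hAA' : IndepFun A A' μ) (hBB' : IndepFun B B' μ)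
    (hlawA : μ.map A' = μ.map A) (hlawB : μ.map B' = μ.map B) :
    2 * μ.real {ω | A ω ≠ B ω} - μ.real {ω | A ω ≠ A' ω} - μ.real {ω | B ω ≠ B' ω}
      = ∑ x, ((μ.map A).real {x} - (μ.map B).real {x}) ^ 2 := by
  rw [hAB.measureReal_ne_eq_one_sub_sum hA hB, hAA'.measureReal_ne_eq_one_sub_sum hA hA',
    hBB'.measureReal_ne_eq_one_sub_sum hB hB', hlawA, hlawB]
  simp only [sub_sq, ← sq, mul_assoc, Finset.sum_add_distrib, Finset.sum_sub_distrib,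
    ← Finset.mul_sum]
  ring

lemma integral_comp_sub_integral_comp_le_sqrt [IsFiniteMeasure μ] {X Y : Ω₀ → Ω}
    (hX : Measurable X) (hY : Measurable Y) (F : Ω → ℝ) :
    ∫ ω, F (X ω) ∂μ - ∫ ω, F (Y ω) ∂μ
      ≤ √((∑ x, ((μ.map X).real {x} - (μ.map Y).real {x}) ^ 2) * ∑ x, F x ^ 2) := by
  rw [integral_comp_eq_sum_map hX, integral_comp_eq_sum_map hY, ← Finset.sum_sub_distrib]
  simp only [← sub_mul]
  exact Real.le_sqrt_of_sq_le (Finset.sum_mul_sq_le_sq_mul_sq _ _ _)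

end FiniteValued

lemma integral_abs_sub_le_add {Ω₀ : Type*} [MeasurableSpace Ω₀] {μ : Measure Ω₀}
    {U V W : Ω₀ → ℝ} (hU : Integrable U μ) (hV : Integrable V μ) (hW : Integrable W μ) :
    ∫ ω, |U ω - W ω| ∂μ ≤ ∫ ω, |U ω - V ω| ∂μ + ∫ ω, |V ω - W ω| ∂μ := by
  have hUV : Integrable (fun ω => |U ω - V ω|) μ := (hU.sub hV).abs
  have hVW : Integrable (fun ω => |V ω - W ω|) μ := (hV.sub hW).abs
  rw [← integral_add hUV hVW]
  exact integral_mono (hU.sub hW).abs (hUV.add hVW) fun ω => abs_sub_le (U ω) (V ω) (W ω)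

theorem stmt_9_general {Ω₀ Ω : Type*} [MeasurableSpace Ω₀] [Fintype Ω]
    [MeasurableSpace Ω] [MeasurableSingletonClass Ω]
    (μ : Measure Ω₀) [IsProbabilityMeasure μ]
    (A B A' B' : Ω₀ → Ω)
    (hA : Measurable A) (hB : Measurable B) (hA' : Measurable A') (hB' : Measurable B')
    (hindep : iIndepFun ![A, B, A', B'] μ)
    (hAA' : Measure.map A' μ = Measure.map A μ)
    (hBB' : Measure.map B' μ = Measure.map B μ)
    (S S' : Ω₀ → ℝ) (hS : Measurable S) (hS' : Measurable S')
    (hS01 : ∀ ω, S ω ∈ Set.Icc (0 : ℝ) 1) (hS'01 : ∀ ω, S' ω ∈ Set.Icc (0 : ℝ) 1)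
    (f g : Ω → ℝ) :
    (∫ ω, |S ω - f (A ω)| ∂μ)
      ≤ (∫ ω, |S ω - g (A ω)| ∂μ) + (∫ ω, |g (B ω) - S' ω| ∂μ)
        + (∫ ω, |S' ω - f (B ω)| ∂μ)
        + Real.sqrt ((2 * (μ {ω | A ω ≠ B ω}).toReal - (μ {ω | A ω ≠ A' ω}).toReal
            - (μ {ω | B ω ≠ B' ω}).toReal) * ∑ x, |g x - f x| ^ 2) := by
  have hε := two_mul_measureReal_ne_sub_sub_eq_sum_sq hA hB hA' hB'
    (by simpa using hindep.indepFun (i := 0) (j := 1) (by decide))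
    (by simpa using hindep.indepFun (i := 0) (j := 2) (by decide))
    (by simpa using hindep.indepFun (i := 1) (j := 3) (by decide)) hAA' hBB'
  simp only [← measureReal_def]
  rw [hε]
  have hS_int : Integrable S μ := .of_mem_Icc 0 1 hS.aemeasurable (ae_of_all μ hS01)
  have hS'_int : Integrable S' μ := .of_mem_Icc 0 1 hS'.aemeasurable (ae_of_all μ hS'01)
  have hcomp_int {X : Ω₀ → Ω} (hX : Measurable X) (F : Ω → ℝ) :
      Integrable (fun ω => F (X ω)) μ :=
    Integrable.of_finite.comp_measurable hX
  have hviaA := integral_abs_sub_le_add hS_int (hcomp_int hA g) (hcomp_int hA f)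
  have hviaB := integral_abs_sub_le_add (hcomp_int hB g) hS'_int (hcomp_int hB f)
  have hshift := integral_comp_sub_integral_comp_le_sqrt (μ := μ) hA hB fun x => |g x - f x|
  linarith

/-- Adaptation bound: for independent `A, B` on a finite set `Ω` (with i.i.d. copies
`A', B'`, all mutually independent), `[0,1]`-valued random variables `S` (independent
of `A`) and `S'` (independent of `B`), and functions `f, g : Ω → [0,1]`:
`E[|S − f(A)|] ≤ E[|S − g(A)|] + E[|g(B) − S'|] + E[|S' − f(B)|]
  + sqrt(ε(A,B) · ∑_x |g x − f x|²)`. -/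
theorem stmt_9 {Ω₀ Ω : Type*} [MeasurableSpace Ω₀] [Fintype Ω]
    [MeasurableSpace Ω] [MeasurableSingletonClass Ω]
    (μ : Measure Ω₀) [IsProbabilityMeasure μ]
    (A B A' B' : Ω₀ → Ω)
    (hA : Measurable A) (hB : Measurable B) (hA' : Measurable A') (hB' : Measurable B')
    (hindep : iIndepFun ![A, B, A', B'] μ)
    (hAA' : Measure.map A' μ = Measure.map A μ)
    (hBB' : Measure.map B' μ = Measure.map B μ)
    (S S' : Ω₀ → ℝ) (hS : Measurable S) (hS' : Measurable S')
    (hS01 : ∀ ω, S ω ∈ Set.Icc (0 : ℝ) 1) (hS'01 : ∀ ω, S' ω ∈ Set.Icc (0 : ℝ) 1)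
    (hSA : IndepFun S A μ) (hS'B : IndepFun S' B μ)
    (f g : Ω → ℝ)
    (hf : ∀ x, f x ∈ Set.Icc (0 : ℝ) 1) (hg : ∀ x, g x ∈ Set.Icc (0 : ℝ) 1) :
    (∫ ω, |S ω - f (A ω)| ∂μ)
      ≤ (∫ ω, |S ω - g (A ω)| ∂μ) + (∫ ω, |g (B ω) - S' ω| ∂μ)
        + (∫ ω, |S' ω - f (B ω)| ∂μ)
        + Real.sqrt ((2 * (μ {ω | A ω ≠ B ω}).toReal - (μ {ω | A ω ≠ A' ω}).toReal
            - (μ {ω | B ω ≠ B' ω}).toReal) * ∑ x, |g x - f x| ^ 2) :=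
  stmt_9_general μ A B A' B' hA hB hA' hB' hindep hAA' hBB' S S' hS hS' hS01 hS'01 f g
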